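/- Let G be a connected simple undirected graph of order n and size m (m = number of edges) with no isolated vertices, and let 𝓛 = D^{−1/2} L D^{−1/2} be its normalized Laplacian matrix. Then G has exactly k (2 ≤ k ≤ n) distinct normalized-Laplacian eigenvalues if and only if there exist k − 1 distinct nonzero real numbers μ₁, μ₂, …, μ_{k−1} such that: (i) 𝓛 − μᵢI is singular for each 1 ≤ i ≤ k − 1; and (ii) ∏_{i=1}^{k−1} (𝓛 − μᵢI) = (−1)^{k−1} (∏_{i=1}^{k−1} μᵢ / (2m)) · α·αᵀ, where α ∈ ℝⁿ is the vector with entries αⱼ = √dⱼ (dⱼ the degree of vertex j). Moreover, in that case μ₁, μ₂, …, μ_{k−1}, 0 are exactly the k distinct normalized-Laplacian eigenvalues of G. -/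

import Mathlib

open Polynomial Matrix

/-- The normalized Laplacian matrix `𝓛 = D^{−1/2} L D^{−1/2}` of a graph, with entries
`𝓛_{ij} = L_{ij} / √(dᵢ dⱼ)`. -/
noncomputable def normLapMatrix {n : ℕ} (G : SimpleGraph (Fin n)) [DecidableRel G.Adj] :
    Matrix (Fin n) (Fin n) ℝ :=
  Matrix.of fun i j =>
    G.lapMatrix ℝ i j / Real.sqrt ((G.degree i : ℝ) * (G.degree j : ℝ))

/-!
Write `𝓛` for the normalized Laplacian and `α = (√dⱼ)ⱼ`. For a connected graph, `ker 𝓛 = ℝα`.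
If `μ₁, …, μ_{k-1}` are the nonzero eigenvalues and `p = ∏ (X - μᵢ)`, then `X * p` vanishes on the
spectrum of the symmetric matrix `𝓛`, so `𝓛 * p(𝓛) = 0` and every column of `p(𝓛)` lies in `ℝα`.
Being symmetric, `p(𝓛)` is a multiple of `α αᵀ`, and the multiple is fixed by `p(𝓛) α = p(0) α`.
Conversely, if `p(𝓛)` is a multiple of `α αᵀ`, then `𝓛 * p(𝓛) = 0`, so every eigenvalue of `𝓛`
is `0` or some `μᵢ`.
-/

theorem Set.exists_injective_fin_range_eq {α : Type*} {s : Set α} (hs : s.Finite) {m : ℕ}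
    (h : s.ncard = m) : ∃ f : Fin m → α, Function.Injective f ∧ Set.range f = s := by
  have := hs.to_subtype
  let e : s ≃ Fin m := Finite.equivFinOfCardEq (by rw [Nat.card_coe_set_eq, h])
  refine ⟨Subtype.val ∘ e.symm, Subtype.val_injective.comp e.symm.injective, ?_⟩
  rw [Set.range_comp, e.symm.range_eq_univ, Set.image_univ, Subtype.range_coe]

theorem Polynomial.isRoot_prod_X_sub_C_iff {R ι : Type*} [CommRing R] [IsDomain R] [Fintype ι]
    (μ : ι → R) (x : R) : (∏ i, (X - C (μ i))).IsRoot x ↔ x ∈ Set.range μ := by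
  simp [eval_prod, Finset.prod_eq_zero_iff, sub_eq_zero, eq_comm (a := x)]

theorem Polynomial.eval_zero_prod_X_sub_C {R ι : Type*} [CommRing R] [Fintype ι] (μ : ι → R) :
    (∏ i, (X - C (μ i))).eval 0 = (-1) ^ Fintype.card ι * ∏ i, μ i := by
  simp [eval_prod, Finset.prod_neg]

theorem spectrum.isRoot_of_aeval_eq_zero {K A : Type*} [Field K] [Ring A] [Algebra K A]
    {a : A} {q : K[X]} (hq : aeval a q = 0) {x : K} (hx : x ∈ spectrum K a) : q.IsRoot x := by
  rcases subsingleton_or_nontrivial A with hA | hA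
  · simp [spectrum.of_subsingleton] at hx
  · simpa [hq, spectrum.zero_eq] using spectrum.subset_polynomial_aeval a q ⟨x, hx, rfl⟩

namespace Matrix

theorem IsHermitian.isSymm_of_real {ι : Type*} {A : Matrix ι ι ℝ} (hA : A.IsHermitian) :
    A.IsSymm := by
  change Aᵀ = A
  simpa only [IsHermitian, conjTranspose_eq_transpose_of_trivial] using hA

variable {ι : Type*} [Fintype ι] [DecidableEq ι]

theorem mem_spectrum_iff_det_sub_smul_one_eq_zero {K : Type*} [Field K] (A : Matrix ι ι K)
    (x : K) : x ∈ spectrum K A ↔ (A - x • 1).det = 0 := by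
  rw [spectrum.mem_iff, isUnit_iff_isUnit_det, isUnit_iff_ne_zero, not_not,
    Algebra.algebraMap_eq_smul_one, ← neg_sub, det_neg, mul_eq_zero]
  simp

theorem zero_mem_spectrum_of_mulVec_eq_zero {K : Type*} [Field K] {A : Matrix ι ι K}
    {v : ι → K} (hv : v ≠ 0) (hAv : A *ᵥ v = 0) : 0 ∈ spectrum K A := by
  rw [mem_spectrum_iff_det_sub_smul_one_eq_zero, zero_smul, sub_zero]
  exact exists_mulVec_eq_zero_iff.1 ⟨v, hv, hAv⟩

theorem IsHermitian.aeval_eq_zero_of_forall_isRoot {A : Matrix ι ι ℝ} (hA : A.IsHermitian)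
    {q : ℝ[X]} (hq : ∀ x ∈ spectrum ℝ A, q.IsRoot x) : aeval A q = 0 := by
  rw [← cfc_polynomial q A hA.isSelfAdjoint, ← cfc_zero ℝ A]
  exact cfc_congr fun x hx => hq x hx

theorem eq_zero_of_isSymm_of_mulVec_mem_span {K : Type*} [Field K] [LinearOrder K]
    [IsStrictOrderedRing K] {Q : Matrix ι ι K} (hQ : Q.IsSymm) {α : ι → K}
    (hQα : Q *ᵥ α = 0) (hrange : ∀ v, ∃ t : K, Q *ᵥ v = t • α) : Q = 0 := by
  refine (toLin' (R := K)).injective (LinearMap.ext fun v => ?_)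
  obtain ⟨t, ht⟩ := hrange v
  have hdot : t * (α ⬝ᵥ α) = 0 := by
    rw [← smul_eq_mul, ← dotProduct_smul, ← ht, dotProduct_mulVec, ← mulVec_transpose, hQ.eq,
      hQα, zero_dotProduct]
  rcases mul_eq_zero.1 hdot with h | h
  · simp [ht, h]
  · simp [ht, dotProduct_self_eq_zero.1 h]

theorem aeval_mulVec_of_mulVec_eq_zero {R : Type*} [CommRing R] {A : Matrix ι ι R}
    {v : ι → R} (hv : A *ᵥ v = 0) (p : R[X]) : aeval A p *ᵥ v = p.eval 0 • v := by
  conv_lhs => rw [← divX_mul_X_add p]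
  rw [map_add, map_mul, aeval_X, aeval_C, add_mulVec, ← mulVec_mulVec, hv, mulVec_zero, zero_add,
    Algebra.algebraMap_eq_smul_one, smul_mulVec, one_mulVec, coeff_zero_eq_eval_zero]

theorem IsHermitian.aeval_eq_smul_vecMulVec {A : Matrix ι ι ℝ} (hA : A.IsHermitian)
    {α : ι → ℝ} (hα : A *ᵥ α = 0) (hker : ∀ v, A *ᵥ v = 0 → ∃ t : ℝ, v = t • α)
    {p : ℝ[X]} (hp : ∀ x ∈ spectrum ℝ A, x ≠ 0 → p.IsRoot x) :
    aeval A p = (p.eval 0 / (α ⬝ᵥ α)) • vecMulVec α α := by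
  set c := p.eval 0 / (α ⬝ᵥ α)
  have hAp : aeval A (X * p) = 0 := hA.aeval_eq_zero_of_forall_isRoot fun x hx => by
    rcases eq_or_ne x 0 with rfl | hx0
    · simp
    · simp [(hp x hx hx0).eq_zero]
  rw [map_mul, aeval_X] at hAp
  have hsymm : (aeval A p).IsSymm := by
    rw [← cfc_polynomial p A hA.isSelfAdjoint]
    exact IsHermitian.isSymm_of_real (cfc_predicate _ A)
  rw [← sub_eq_zero]
  refine eq_zero_of_isSymm_of_mulVec_mem_span
    (hsymm.sub (IsSymm.smul (transpose_vecMulVec α α) c)) (α := α) ?_ fun v => hker _ ?_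
  · rw [sub_mulVec, aeval_mulVec_of_mulVec_eq_zero hα, smul_mulVec, vecMulVec_mulVec]
    rcases eq_or_ne α 0 with rfl | hα0
    · simp
    have hαα : α ⬝ᵥ α ≠ 0 := fun h => hα0 (dotProduct_self_eq_zero.1 h)
    rw [op_smul_eq_smul, smul_smul, div_mul_cancel₀ _ hαα, sub_self]
  · rw [mulVec_mulVec, Matrix.mul_sub, Matrix.mul_smul, hAp, mul_vecMulVec, hα, zero_vecMulVec,
      smul_zero, sub_zero, zero_mulVec]

theorem IsHermitian.aeval_prod_eq_smul_vecMulVec {κ : Type*} [Fintype κ] {A : Matrix ι ι ℝ}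
    (hA : A.IsHermitian) {α : ι → ℝ} (hα : A *ᵥ α = 0)
    (hker : ∀ v, A *ᵥ v = 0 → ∃ t : ℝ, v = t • α) {μ : κ → ℝ}
    (hμ : Set.range μ = spectrum ℝ A \ {0}) :
    aeval A (∏ i, (X - C (μ i))) =
      ((-1) ^ Fintype.card κ * (∏ i, μ i) / (α ⬝ᵥ α)) • vecMulVec α α := by
  rw [hA.aeval_eq_smul_vecMulVec hα hker fun x hx hx0 => ?_, eval_zero_prod_X_sub_C]
  rw [isRoot_prod_X_sub_C_iff, hμ]
  exact ⟨hx, hx0⟩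

theorem spectrum_subset_insert_zero_of_aeval_eq_smul_vecMulVec {K : Type*} [Field K]
    {A : Matrix ι ι K} {α : ι → K} (hα : A *ᵥ α = 0) {p : K[X]} {c : K}
    (h : aeval A p = c • vecMulVec α α) : spectrum K A ⊆ insert 0 {x | p.IsRoot x} := by
  have hXp : aeval A (X * p) = 0 := by
    rw [map_mul, aeval_X, h, Matrix.mul_smul, mul_vecMulVec, hα, zero_vecMulVec, smul_zero]
  intro x hx
  simpa using spectrum.isRoot_of_aeval_eq_zero hXp hx

theorem spectrum_eq_insert_zero_range_of_aeval_prod_eq_smul_vecMulVec {K κ : Type*} [Field K]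
    [Fintype κ] {A : Matrix ι ι K} {α : ι → K} (hα : A *ᵥ α = 0) (hα0 : α ≠ 0) {μ : κ → K}
    (hμ : ∀ i, (A - μ i • 1).det = 0) {c : K}
    (h : aeval A (∏ i, (X - C (μ i))) = c • vecMulVec α α) :
    spectrum K A = insert 0 (Set.range μ) := by
  refine subset_antisymm ?_ (Set.insert_subset (zero_mem_spectrum_of_mulVec_eq_zero hα0 hα)
    (Set.range_subset_iff.2 fun i => (mem_spectrum_iff_det_sub_smul_one_eq_zero _ _).2 (hμ i)))
  simpa only [isRoot_prod_X_sub_C_iff, Set.ofPred_mem_eq] using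
    spectrum_subset_insert_zero_of_aeval_eq_smul_vecMulVec hα h

end Matrix

section NormLapMatrix

variable {n : ℕ} (G : SimpleGraph (Fin n)) [DecidableRel G.Adj]

theorem normLapMatrix_eq_diagonal_mul_lapMatrix_mul_diagonal :
    normLapMatrix G = diagonal (fun i => (√(G.degree i : ℝ))⁻¹) * G.lapMatrix ℝ *
      diagonal (fun i => (√(G.degree i : ℝ))⁻¹) := by
  ext i j
  rw [mul_diagonal, diagonal_mul, normLapMatrix, of_apply, Real.sqrt_mul (Nat.cast_nonneg _),
    div_eq_mul_inv, mul_inv]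
  ring

theorem isHermitian_normLapMatrix : (normLapMatrix G).IsHermitian := by
  refine IsHermitian.ext fun i j => ?_
  simp only [normLapMatrix, of_apply, star_trivial, (G.isSymm_lapMatrix ℝ).apply i j, mul_comm]

theorem normLapMatrix_mulVec_sqrt_degree (hd : ∀ v, 0 < G.degree v) :
    normLapMatrix G *ᵥ (fun j => √(G.degree j : ℝ)) = 0 := by
  have hconst : diagonal (fun i => (√(G.degree i : ℝ))⁻¹) *ᵥ (fun j => √(G.degree j : ℝ)) =
      fun _ => 1 := by
    ext i
    rw [mulVec_diagonal, inv_mul_cancel₀ (Real.sqrt_pos.2 (Nat.cast_pos.2 (hd i))).ne']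
  rw [normLapMatrix_eq_diagonal_mul_lapMatrix_mul_diagonal, ← mulVec_mulVec, ← mulVec_mulVec,
    hconst, G.lapMatrix_mulVec_const_eq_zero, mulVec_zero]

theorem exists_eq_smul_sqrt_degree_of_normLapMatrix_mulVec_eq_zero (hG : G.Connected)
    (hd : ∀ v, 0 < G.degree v) {v : Fin n → ℝ} (hv : normLapMatrix G *ᵥ v = 0) :
    ∃ t : ℝ, v = t • fun j => √(G.degree j : ℝ) := by
  have hsqrt (i : Fin n) : √(G.degree i : ℝ) ≠ 0 :=
    (Real.sqrt_pos.2 (Nat.cast_pos.2 (hd i))).ne'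
  set w := diagonal (fun i => (√(G.degree i : ℝ))⁻¹) *ᵥ v
  have hw : G.lapMatrix ℝ *ᵥ w = 0 := by
    rw [normLapMatrix_eq_diagonal_mul_lapMatrix_mul_diagonal, ← mulVec_mulVec,
      ← mulVec_mulVec] at hv
    ext i
    have hvi := congrFun hv i
    rw [mulVec_diagonal] at hvi
    exact (mul_eq_zero.1 hvi).resolve_left (inv_ne_zero (hsqrt i))
  obtain ⟨i₀⟩ := hG.nonempty
  refine ⟨w i₀, funext fun j => ?_⟩
  have hwj : w j = w i₀ :=
    G.lapMatrix_mulVec_eq_zero_iff_forall_reachable.1 hw j i₀ (hG.preconnected j i₀)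
  rw [← hwj, Pi.smul_apply, smul_eq_mul, show w j = _ from mulVec_diagonal _ _ _]
  field_simp [hsqrt j]

theorem sqrt_degree_dotProduct_self :
    (fun j => √(G.degree j : ℝ)) ⬝ᵥ (fun j => √(G.degree j : ℝ)) =
      2 * (G.edgeFinset.card : ℝ) := by
  simp only [dotProduct, Real.mul_self_sqrt (Nat.cast_nonneg _)]
  exact_mod_cast G.sum_degrees_eq_twice_card_edges

end NormLapMatrix

theorem normalized_laplacian_distinct_eigenvalues_iff_general
    (n k : ℕ) (hk2 : 2 ≤ k)
    (G : SimpleGraph (Fin n)) [DecidableRel G.Adj] (hG : G.Connected)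
    (hd : ∀ v, 0 < G.degree v) :
    ((spectrum ℝ (normLapMatrix G)).ncard = k ↔
      ∃ μ : Fin (k - 1) → ℝ, Function.Injective μ ∧ (∀ i, μ i ≠ 0) ∧
        (∀ i, (normLapMatrix G - μ i • 1).det = 0) ∧
        (Polynomial.aeval (normLapMatrix G)) (∏ i, (X - C (μ i))) =
          ((-1 : ℝ) ^ (k - 1) * (∏ i, μ i) / (2 * (G.edgeFinset.card : ℝ))) •
            Matrix.vecMulVec (fun j => Real.sqrt (G.degree j))
              (fun j => Real.sqrt (G.degree j))) ∧
    (∀ μ : Fin (k - 1) → ℝ, Function.Injective μ → (∀ i, μ i ≠ 0) →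
      (∀ i, (normLapMatrix G - μ i • 1).det = 0) →
      (Polynomial.aeval (normLapMatrix G)) (∏ i, (X - C (μ i))) =
        ((-1 : ℝ) ^ (k - 1) * (∏ i, μ i) / (2 * (G.edgeFinset.card : ℝ))) •
          Matrix.vecMulVec (fun j => Real.sqrt (G.degree j))
            (fun j => Real.sqrt (G.degree j)) →
      spectrum ℝ (normLapMatrix G) = insert (0 : ℝ) (Set.range μ)) := by
  set α : Fin n → ℝ := fun j => √(G.degree j : ℝ)
  have hα : normLapMatrix G *ᵥ α = 0 := normLapMatrix_mulVec_sqrt_degree G hd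
  have hα0 : α ≠ 0 := by
    obtain ⟨i⟩ := hG.nonempty
    exact fun h => (Real.sqrt_pos.2 (Nat.cast_pos.2 (hd i))).ne' (congrFun h i)
  have h0 : (0 : ℝ) ∈ spectrum ℝ (normLapMatrix G) := zero_mem_spectrum_of_mulVec_eq_zero hα0 hα
  refine ⟨⟨fun hcard => ?_, fun ⟨μ, hμ, hμ0, hsing, hprod⟩ => ?_⟩, fun μ _ _ hsing hprod =>
    spectrum_eq_insert_zero_range_of_aeval_prod_eq_smul_vecMulVec hα hα0 hsing hprod⟩
  · obtain ⟨μ, hμ, hrange⟩ := Set.exists_injective_fin_range_eq (finite_spectrum _).sdiff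
      (m := k - 1) (by rw [Set.ncard_sdiff_singleton_of_mem h0, hcard])
    have hμspec (i : Fin (k - 1)) : μ i ∈ spectrum ℝ (normLapMatrix G) \ {0} :=
      hrange ▸ Set.mem_range_self i
    refine ⟨μ, hμ, fun i => (hμspec i).2,
      fun i => (mem_spectrum_iff_det_sub_smul_one_eq_zero _ _).1 (hμspec i).1, ?_⟩
    rw [(isHermitian_normLapMatrix G).aeval_prod_eq_smul_vecMulVec hα
      (fun _ => exists_eq_smul_sqrt_degree_of_normLapMatrix_mulVec_eq_zero G hG hd) hrange,
      sqrt_degree_dotProduct_self, Fintype.card_fin]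
  · rw [spectrum_eq_insert_zero_range_of_aeval_prod_eq_smul_vecMulVec hα hα0 hsing hprod,
      Set.ncard_insert_of_notMem (by rintro ⟨i, hi⟩; exact hμ0 i hi) (Set.finite_range μ),
      Set.ncard_range_of_injective hμ, Nat.card_fin]
    omega

/-- **Theorem.** Let `G` be a connected simple graph of order `n` and size `m`, with no
isolated vertices, and let `𝓛` be its normalized Laplacian matrix. Then `G` has exactly `k`
(`2 ≤ k ≤ n`) distinct normalized-Laplacian eigenvalues iff there exist `k − 1` distinct
nonzero real numbers `μ₁, …, μ_{k−1}` such that (i) `𝓛 − μᵢI` is singular for each `i`, and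
(ii) `∏_{i=1}^{k−1} (𝓛 − μᵢI) = (−1)^{k−1} (∏_{i=1}^{k−1} μᵢ / (2m)) · α αᵀ`, where
`αⱼ = √dⱼ`. Moreover, `μ₁, …, μ_{k−1}, 0` are then exactly the `k` distinct
normalized-Laplacian eigenvalues of `G`. -/
theorem normalized_laplacian_distinct_eigenvalues_iff
    (n k : ℕ) (hk2 : 2 ≤ k) (hkn : k ≤ n)
    (G : SimpleGraph (Fin n)) [DecidableRel G.Adj] (hG : G.Connected)
    (hd : ∀ v, 0 < G.degree v) :
    ((spectrum ℝ (normLapMatrix G)).ncard = k ↔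
      ∃ μ : Fin (k - 1) → ℝ, Function.Injective μ ∧ (∀ i, μ i ≠ 0) ∧
        (∀ i, (normLapMatrix G - μ i • 1).det = 0) ∧
        (Polynomial.aeval (normLapMatrix G)) (∏ i, (X - C (μ i))) =
          ((-1 : ℝ) ^ (k - 1) * (∏ i, μ i) / (2 * (G.edgeFinset.card : ℝ))) •
            Matrix.vecMulVec (fun j => Real.sqrt (G.degree j))
              (fun j => Real.sqrt (G.degree j))) ∧
    (∀ μ : Fin (k - 1) → ℝ, Function.Injective μ → (∀ i, μ i ≠ 0) →
      (∀ i, (normLapMatrix G - μ i • 1).det = 0) →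
      (Polynomial.aeval (normLapMatrix G)) (∏ i, (X - C (μ i))) =
        ((-1 : ℝ) ^ (k - 1) * (∏ i, μ i) / (2 * (G.edgeFinset.card : ℝ))) •
          Matrix.vecMulVec (fun j => Real.sqrt (G.degree j))
            (fun j => Real.sqrt (G.degree j)) →
      spectrum ℝ (normLapMatrix G) = insert (0 : ℝ) (Set.range μ)) :=
  normalized_laplacian_distinct_eigenvalues_iff_general n k hk2 G hG hd
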